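/- arXiv:2203.05100 — 2 statements merged into one kernel-verified Lean document; each statement's English description precedes it below -/
import Mathlib

section
/- Let p̄_n(z) = 2(d/(2πn))^{d/2} exp(−d‖z‖²/(2n)) for n ≥ 1 and z ∈ ℤ^d. If there is c₂ > 0 with |p̄_n(z) − p̄_{n+1}(z)| ≤ c₂ n^{−d/2−1} for all n ≥ 1 and z, then for every ε > 0 there exists c > 0 such that ∑_{n=1}^∞ |p̄_n(z) − p̄_{n+1}(z)| ≤ c‖z‖^{−d+ε} for all z ∈ ℤ^d \ {0}. -/
open Real Set
open scoped ENNReal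


/-- Euclidean norm of a point of `ℤ^d`. -/
noncomputable def znorm (d : ℕ) (z : Fin d → ℤ) : ℝ :=
  Real.sqrt (∑ i, ((z i : ℝ)) ^ 2)

/-- The Gaussian local limit approximation to the `n`-step transition probability. -/
noncomputable def pbar (d : ℕ) (n : ℕ) (z : Fin d → ℤ) : ℝ :=
  2 * ((d : ℝ) / (2 * π * n)) ^ ((d : ℝ) / 2) *
    Real.exp (-(d : ℝ) * znorm d z ^ 2 / (2 * n))


lemma aux_exp_le (k x : ℝ) (hk : 0 ≤ k) (hx : 0 < x) :
    Real.exp (-x) ≤ k ^ k * x ^ (-k) := by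
  rcases eq_or_lt_of_le hk with rfl | hk
  · simp [Real.exp_le_one_iff, hx.le]
  · have hxk : (0:ℝ) < x ^ k := Real.rpow_pos_of_pos hx k
    have h1 : x ^ k ≤ k ^ k * Real.exp x := by
      have hlog : Real.log (x / k) ≤ x / k - 1 := Real.log_le_sub_one_of_pos (by positivity)
      have hlog2 : Real.log x ≤ Real.log k + x / k := by
        rw [Real.log_div hx.ne' hk.ne'] at hlog
        linarith
      have hmul : k * Real.log x ≤ k * Real.log k + x := by
        have h3 := mul_le_mul_of_nonneg_left hlog2 hk.le
        have h4 : k * (x / k) = x := by field_simp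
        nlinarith
      calc x ^ k = Real.exp (k * Real.log x) := by
            rw [Real.rpow_def_of_pos hx, mul_comm]
        _ ≤ Real.exp (k * Real.log k + x) := Real.exp_le_exp.mpr hmul
        _ = k ^ k * Real.exp x := by
            rw [Real.exp_add, Real.rpow_def_of_pos hk, mul_comm k (Real.log k)]
    rw [Real.rpow_neg hx.le, Real.exp_neg, ← div_eq_mul_inv,
      le_div_iff₀ hxk, inv_mul_le_iff₀ (Real.exp_pos x), mul_comm]
    exact h1

lemma aux_interp (a b C θ : ℝ) (ha : 0 ≤ a) (hb : a ≤ b) (hC : a ≤ C)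
    (hθ0 : 0 ≤ θ) (hθ1 : θ ≤ 1) : a ≤ b ^ (1 - θ) * C ^ θ := by
  rcases eq_or_lt_of_le ha with rfl | ha
  · positivity
  · have h1 : a = a ^ (1 - θ) * a ^ θ := by
      rw [← Real.rpow_add ha]; norm_num
    rw [h1]
    exact mul_le_mul (Real.rpow_le_rpow ha.le hb (by linarith))
      (Real.rpow_le_rpow ha.le hC hθ0) (Real.rpow_nonneg ha.le θ)
      (Real.rpow_nonneg (ha.le.trans hb) _)

lemma aux_rpow_succ (m e k : ℝ) (hm : 1 ≤ m) (hek : e ≤ k) (hk : 0 ≤ k) :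
    (m + 1) ^ e ≤ 2 ^ k * m ^ e := by
  have hm0 : (0:ℝ) < m := by linarith
  rcases le_or_gt 0 e with he | he
  · calc (m + 1) ^ e ≤ (2 * m) ^ e :=
        Real.rpow_le_rpow (by linarith) (by linarith) he
      _ = 2 ^ e * m ^ e := Real.mul_rpow (by norm_num) hm0.le
      _ ≤ 2 ^ k * m ^ e := by
        apply mul_le_mul_of_nonneg_right
          (Real.rpow_le_rpow_of_exponent_le one_le_two hek) (by positivity)
  · calc (m + 1) ^ e ≤ m ^ e :=
        Real.rpow_le_rpow_of_nonpos hm0 (by linarith) he.le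
      _ ≤ 2 ^ k * m ^ e := by
        nlinarith [Real.one_le_rpow one_le_two hk, Real.rpow_pos_of_pos hm0 e]

lemma one_le_znorm (d : ℕ) (z : Fin d → ℤ) (hz : z ≠ 0) : 1 ≤ znorm d z := by
  obtain ⟨i, hi⟩ := Function.ne_iff.mp hz
  have h1 : (1:ℝ) ≤ ((z i : ℝ)) ^ 2 := by
    have : 1 ≤ |z i| := Int.one_le_abs (by simpa using hi)
    have h2 : (1:ℝ) ≤ |(z i : ℝ)| := by exact_mod_cast (by push_cast at *; exact_mod_cast this)
    nlinarith [sq_abs ((z i : ℝ))]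
  have h2 : (1:ℝ) ≤ ∑ j, ((z j : ℝ)) ^ 2 :=
    h1.trans (Finset.single_le_sum (f := fun j => ((z j : ℝ))^2) (fun j _ => sq_nonneg _) (Finset.mem_univ i))
  calc (1:ℝ) = Real.sqrt 1 := by simp
    _ ≤ znorm d z := Real.sqrt_le_sqrt h2

lemma pbar_le (d : ℕ) (hd : 1 ≤ d) (k : ℝ) (hk : 0 ≤ k) (m : ℕ) (hm : 1 ≤ m)
    (z : Fin d → ℤ) (hr : 1 ≤ znorm d z) :
    pbar d m z ≤ (2 * ((d:ℝ)/(2*π))^((d:ℝ)/2) * (k^k * ((2:ℝ)/d)^k)) *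
      ((m:ℝ) ^ (k - (d:ℝ)/2) * znorm d z ^ (-(2*k))) := by
  set r := znorm d z with hrdef
  have hr0 : (0:ℝ) < r := lt_of_lt_of_le one_pos hr
  have hm0 : (0:ℝ) < m := by exact_mod_cast hm
  have hd0 : (0:ℝ) < d := by exact_mod_cast hd
  have hx : (0:ℝ) < (d:ℝ) * r^2 / (2*m) := by positivity
  have hA : ((d:ℝ) / (2*π*m)) ^ ((d:ℝ)/2)
      = ((d:ℝ)/(2*π))^((d:ℝ)/2) * (m:ℝ)^(-((d:ℝ)/2)) := by
    rw [show (d:ℝ)/(2*π*m) = ((d:ℝ)/(2*π))/m by rw [div_div],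
      Real.div_rpow (by positivity) hm0.le, Real.rpow_neg hm0.le, div_eq_mul_inv]
  have hxinv : ((d:ℝ)*r^2/(2*(m:ℝ)))^(-k) = ((2:ℝ)/d)^k * ((m:ℝ)^k * r^(-(2*k))) := by
    rw [Real.rpow_neg hx.le, ← Real.inv_rpow hx.le,
      show ((d:ℝ)*r^2/(2*(m:ℝ)))⁻¹ = ((2:ℝ)/d) * ((m:ℝ) * (r^2)⁻¹) by
        field_simp,
      Real.mul_rpow (by positivity) (by positivity),
      Real.mul_rpow hm0.le (by positivity),
      Real.inv_rpow (sq_nonneg r), ← Real.rpow_natCast r 2, ← Real.rpow_mul hr0.le,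
      ← Real.rpow_neg hr0.le]
    norm_num
  have hE : Real.exp (-(d:ℝ) * r^2/(2*(m:ℝ)))
      ≤ k^k * (((2:ℝ)/d)^k * ((m:ℝ)^k * r^(-(2*k)))) := by
    rw [show -(d:ℝ) * r^2/(2*(m:ℝ)) = -((d:ℝ)*r^2/(2*(m:ℝ))) by ring]
    calc Real.exp (-((d:ℝ)*r^2/(2*(m:ℝ)))) ≤ k^k * ((d:ℝ)*r^2/(2*(m:ℝ)))^(-k) :=
          aux_exp_le k _ hk hx
      _ = k^k * (((2:ℝ)/d)^k * ((m:ℝ)^k * r^(-(2*k)))) := by rw [hxinv]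
  have hmm : (m:ℝ)^(k-(d:ℝ)/2) = (m:ℝ)^k * (m:ℝ)^(-((d:ℝ)/2)) := by
    rw [← Real.rpow_add hm0]; ring_nf
  calc pbar d m z
      = 2 * (((d:ℝ)/(2*π))^((d:ℝ)/2) * (m:ℝ)^(-((d:ℝ)/2)))
        * Real.exp (-(d:ℝ)*r^2/(2*(m:ℝ))) := by rw [pbar, hA]
    _ ≤ 2 * (((d:ℝ)/(2*π))^((d:ℝ)/2) * (m:ℝ)^(-((d:ℝ)/2)))
        * (k^k * (((2:ℝ)/d)^k * ((m:ℝ)^k * r^(-(2*k))))) := by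
          apply mul_le_mul_of_nonneg_left hE
          positivity
    _ = (2 * ((d:ℝ)/(2*π))^((d:ℝ)/2) * (k^k * ((2:ℝ)/d)^k)) *
        ((m:ℝ) ^ (k - (d:ℝ)/2) * r ^ (-(2*k))) := by rw [hmm]; ring

lemma pbar_nonneg (d n : ℕ) (z : Fin d → ℤ) : 0 ≤ pbar d n z := by
  unfold pbar; positivity

set_option maxHeartbeats 1000000 in
/-- Summed discrepancy between consecutive Gaussian approximations
(Lemma 2(ii) of the paper). -/
theorem sum_pbar_consecutive_bound (d : ℕ) (hd : 1 ≤ d)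
    (c₂ : ℝ) (hc₂ : 0 < c₂)
    (h₂ : ∀ n : ℕ, 1 ≤ n → ∀ z : Fin d → ℤ,
      |pbar d n z - pbar d (n + 1) z| ≤ c₂ * (n : ℝ) ^ (-(d : ℝ) / 2 - 1)) :
    ∀ ε : ℝ, 0 < ε → ∃ c : ℝ, 0 < c ∧ ∀ z : Fin d → ℤ, z ≠ 0 →
      (∑' n : ℕ, ENNReal.ofReal |pbar d (n + 1) z - pbar d (n + 2) z|) ≤
        ENNReal.ofReal (c * znorm d z ^ (-(d : ℝ) + ε)) := by
  intro ε hε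
  set ε' : ℝ := min ε 1 with hε'def
  have hε'0 : 0 < ε' := lt_min hε one_pos
  have hε'1 : ε' ≤ 1 := min_le_right _ _
  have hε'ε : ε' ≤ ε := min_le_left _ _
  set θ : ℝ := ε' / 4 with hθdef
  have hθ0 : 0 < θ := by positivity
  have hθ1 : θ ≤ 1 := by rw [hθdef]; linarith
  have hd1 : (1:ℝ) ≤ d := by exact_mod_cast hd
  set k : ℝ := ((d:ℝ) - ε') / (2 * θ) with hkdef
  have hk : 0 ≤ k := div_nonneg (by linarith) (by linarith)
  have hkθ : k * θ = ((d:ℝ) - ε') / 2 := by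
    rw [hkdef]; field_simp
  have hkk : (0:ℝ) < k ^ k := by
    rcases eq_or_lt_of_le hk with h | h
    · rw [← h, Real.rpow_zero]; norm_num
    · positivity
  set C0 : ℝ := 2 * ((d:ℝ)/(2*π))^((d:ℝ)/2) * (k^k * ((2:ℝ)/d)^k) with hC0def
  have hC0 : 0 < C0 := by
    have hπ := Real.pi_pos
    apply mul_pos (by positivity) (mul_pos hkk (by positivity))
  set C1 : ℝ := C0 * (1 + 2 ^ k) with hC1def
  have h2k : (0:ℝ) < 2 ^ k := Real.rpow_pos_of_pos two_pos k
  have hC1 : 0 < C1 := mul_pos hC0 (by linarith)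
  set B : ℝ := c₂ ^ (1 - θ) * C1 ^ θ with hBdef
  have hB : 0 < B := mul_pos (Real.rpow_pos_of_pos hc₂ _) (Real.rpow_pos_of_pos hC1 _)
  have hsum0 : Summable (fun n : ℕ => ((n:ℝ)) ^ (-1 - θ)) :=
    Real.summable_nat_rpow.mpr (by linarith)
  have hsum1 : Summable (fun n : ℕ => ((n:ℝ) + 1) ^ (-1 - θ)) := by
    have h := (_root_.summable_nat_add_iff (f := fun n : ℕ => ((n:ℝ)) ^ (-1 - θ)) 1).mpr hsum0
    exact h.congr (fun n => by push_cast; ring_nf)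
  set S : ℝ := ∑' n : ℕ, ((n:ℝ) + 1) ^ (-1 - θ) with hSdef
  have hS : 0 < S := by
    apply Summable.tsum_pos hsum1 (fun i => Real.rpow_nonneg (by positivity) _) 0
    norm_num
  refine ⟨B * S, by positivity, ?_⟩
  intro z hz
  have hr : 1 ≤ znorm d z := one_le_znorm d z hz
  have hr0 : (0:ℝ) < znorm d z := lt_of_lt_of_le one_pos hr
  set r : ℝ := znorm d z with hrr
  have hpt : ∀ n : ℕ, |pbar d (n+1) z - pbar d (n+2) z| ≤
      B * r ^ (ε' - (d:ℝ)) * (((n:ℝ) + 1) ^ (-1 - θ)) := by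
    intro n
    set m : ℕ := n + 1 with hmdef
    have hm : 1 ≤ m := Nat.le_add_left 1 n
    have hm0 : (0:ℝ) < m := by exact_mod_cast hm
    have hm1 : (1:ℝ) ≤ m := by exact_mod_cast hm
    have hb := h₂ m hm z
    have h1 := pbar_le d hd k hk m hm z hr
    have h2' := pbar_le d hd k hk (m+1) (le_trans hm (Nat.le_succ m)) z hr
    have h3 : ((m:ℝ) + 1) ^ (k - (d:ℝ)/2) ≤ 2 ^ k * (m:ℝ) ^ (k - (d:ℝ)/2) :=
      aux_rpow_succ (m:ℝ) _ k hm1 (by linarith) hk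
    have hRnn : (0:ℝ) ≤ r ^ (-(2*k)) := Real.rpow_nonneg hr0.le _
    have hmul : ((m:ℝ) + 1) ^ (k - (d:ℝ)/2) * r ^ (-(2*k))
        ≤ 2 ^ k * ((m:ℝ) ^ (k - (d:ℝ)/2) * r ^ (-(2*k))) := by
      rw [← mul_assoc]
      exact mul_le_mul_of_nonneg_right h3 hRnn
    have hcast : ((m+1:ℕ):ℝ) = (m:ℝ) + 1 := by push_cast; ring
    rw [← hrr, hcast] at h2'
    rw [← hrr] at h1
    have h4 := h2'.trans (mul_le_mul_of_nonneg_left hmul hC0.le)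
    rw [← hC0def] at h1 h4
    have hsumb : pbar d m z + pbar d (m+1) z
        ≤ C1 * ((m:ℝ) ^ (k - (d:ℝ)/2) * r ^ (-(2*k))) := by
      have heq : C0 * ((m:ℝ) ^ (k - (d:ℝ)/2) * r ^ (-(2*k)))
          + C0 * (2 ^ k * ((m:ℝ) ^ (k - (d:ℝ)/2) * r ^ (-(2*k))))
          = C0 * (1 + 2 ^ k) * ((m:ℝ) ^ (k - (d:ℝ)/2) * r ^ (-(2*k))) := by ring
      rw [hC1def]
      linarith [add_le_add h1 h4]
    have habs : |pbar d m z - pbar d (m+1) z| ≤ pbar d m z + pbar d (m+1) z := by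
      have p1 := pbar_nonneg d m z
      have p2 := pbar_nonneg d (m+1) z
      rw [abs_le]; constructor <;> linarith
    have hint := aux_interp _ _ _ θ (abs_nonneg _) hb (habs.trans hsumb) hθ0.le hθ1
    have e1 : (c₂ * (m:ℝ) ^ (-(d:ℝ)/2 - 1)) ^ (1 - θ)
        = c₂ ^ (1-θ) * (m:ℝ) ^ ((-(d:ℝ)/2 - 1) * (1 - θ)) := by
      rw [Real.mul_rpow hc₂.le (Real.rpow_nonneg hm0.le _), ← Real.rpow_mul hm0.le]
    have e2 : (C1 * ((m:ℝ) ^ (k - (d:ℝ)/2) * r ^ (-(2*k)))) ^ θ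
        = C1 ^ θ * ((m:ℝ) ^ ((k - (d:ℝ)/2) * θ) * r ^ ((-(2*k)) * θ)) := by
      rw [Real.mul_rpow hC1.le (by positivity),
        Real.mul_rpow (Real.rpow_nonneg hm0.le _) hRnn,
        ← Real.rpow_mul hm0.le, ← Real.rpow_mul hr0.le]
    have e3 : (-(d:ℝ)/2 - 1) * (1 - θ) + (k - (d:ℝ)/2) * θ = -1 - θ := by
      linear_combination hkθ + 2 * hθdef
    have e4 : (-(2*k)) * θ = ε' - (d:ℝ) := by linear_combination (-2 : ℝ) * hkθ
    have e5 : (m:ℝ) ^ ((-(d:ℝ)/2 - 1) * (1 - θ)) * (m:ℝ) ^ ((k - (d:ℝ)/2) * θ)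
        = (m:ℝ) ^ (-1 - θ) := by
      rw [← Real.rpow_add hm0, e3]
    have hfin : (c₂ * (m:ℝ) ^ (-(d:ℝ)/2 - 1)) ^ (1 - θ)
          * (C1 * ((m:ℝ) ^ (k - (d:ℝ)/2) * r ^ (-(2*k)))) ^ θ
        = B * r ^ (ε' - (d:ℝ)) * ((m:ℝ) ^ (-1 - θ)) := by
      rw [e1, e2, e4, hBdef, ← e5]; ring
    have hcast2 : ((n:ℝ) + 1) = (m:ℝ) := by rw [hmdef]; push_cast; ring
    rw [hcast2]
    calc |pbar d m z - pbar d (m+1) z| ≤ _ := hint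
      _ = B * r ^ (ε' - (d:ℝ)) * ((m:ℝ) ^ (-1 - θ)) := hfin
  have hsummable : Summable (fun n : ℕ => B * r ^ (ε' - (d:ℝ)) * (((n:ℝ) + 1) ^ (-1 - θ))) :=
    hsum1.mul_left _
  have hterm : ∀ n : ℕ, 0 ≤ B * r ^ (ε' - (d:ℝ)) * (((n:ℝ) + 1) ^ (-1 - θ)) := by
    intro n
    have : (0:ℝ) ≤ ((n:ℝ) + 1) ^ (-1 - θ) := Real.rpow_nonneg (by positivity) _
    positivity
  calc (∑' n : ℕ, ENNReal.ofReal |pbar d (n + 1) z - pbar d (n + 2) z|)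
      ≤ ∑' n : ℕ, ENNReal.ofReal (B * r ^ (ε' - (d:ℝ)) * (((n:ℝ) + 1) ^ (-1 - θ))) :=
        ENNReal.tsum_le_tsum (fun n => ENNReal.ofReal_le_ofReal (hpt n))
    _ = ENNReal.ofReal (∑' n : ℕ, B * r ^ (ε' - (d:ℝ)) * (((n:ℝ) + 1) ^ (-1 - θ))) :=
        (ENNReal.ofReal_tsum_of_nonneg hterm hsummable).symm
    _ = ENNReal.ofReal (B * r ^ (ε' - (d:ℝ)) * S) := by rw [hSdef, tsum_mul_left]
    _ ≤ ENNReal.ofReal ((B * S) * r ^ (-(d:ℝ) + ε)) := by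
        apply ENNReal.ofReal_le_ofReal
        have hle : r ^ (ε' - (d:ℝ)) ≤ r ^ (-(d:ℝ) + ε) :=
          Real.rpow_le_rpow_of_exponent_le hr (by linarith)
        have hmul2 := mul_le_mul_of_nonneg_left hle (mul_nonneg hB.le hS.le)
        linarith [hmul2]
end

section
/- Let p̄_n(z) = 2(d/(2πn))^{d/2} exp(−d‖z‖²/(2n)) and fix z ∈ ℤ^d, z ≠ 0. Define D(z) = ∑_{n=1}^∞ (p̄_n(z)/2)·P(𝒩 ≥ n) for an ℕ-valued random variable 𝒩. Then D(z) satisfies the sandwich bounds: ∫_0^∞ s^{d/2−2}e^{−s}(1 + 2s/(d‖z‖²))^{−d/2} P(2𝒩/(d‖z‖²) > 1/s) ds ≤ (2π^{d/2}/d)‖z‖^{d−2} D(z) ≤ (π^{d/2}/d)‖z‖^{d−2} p̄_1(z) + ∫_0^{d‖z‖²/4} s^{d/2−2}e^{−s}(1 − 2s/(d‖z‖²))^{−d/2} P(2𝒩/(d‖z‖²) > 1/s − 4/(d‖z‖²)) ds. -/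
open MeasureTheory Set Real

/-!
Write `p = d/2`, `c = d‖z‖²` and `N(t) = P(𝒩 > t)`. Up to the factor `(2π^p/d)‖z‖^{d-2}`, the
`n`-th term of `D(z)` is `a(n) b(n)` with `a(t) = (c/2)^{p-1} t^{-p} N(t-1)` non-increasing and
`b(t) = e^{-c/(2t)}` non-decreasing. Hence `a(t+1) b(t) ≤ a(n) b(n)` on `(n-1, n]` and
`a(n) b(n) ≤ a(t-1) b(t)` on `(n, n+1]`, which bounds the series below by `∫_0^∞ a(t+1) b(t) dt`
and, after splitting off the term `n = 1`, above by `a(1) b(1) + ∫_2^∞ a(t-1) b(t) dt`. The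
substitution `s = c/(2t)` turns these two integrals into the ones of the statement.
-/

section SumIntegral

variable {g : ℝ → ℝ} {u v : ℕ → ℝ} {k : ℝ}

lemma Ioi_eq_iUnion_Ioc_add_natCast (k : ℝ) :
    Ioi k = ⋃ n : ℕ, Ioc (k + n) (k + n + 1) := by
  ext x
  simp only [mem_Ioi, mem_iUnion, mem_Ioc]
  constructor
  · intro hx
    have hceil : 1 ≤ ⌈x - k⌉₊ := Nat.one_le_ceil_iff.2 (sub_pos.2 hx)
    refine ⟨⌈x - k⌉₊ - 1, ?_, ?_⟩ <;> push_cast [Nat.cast_sub hceil]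
    · linarith [Nat.ceil_lt_add_one (sub_nonneg.2 hx.le)]
    · linarith [Nat.le_ceil (x - k)]
  · rintro ⟨n, hn, -⟩
    linarith [(Nat.cast_nonneg n : (0 : ℝ) ≤ n)]

lemma pairwise_disjoint_Ioc_add_natCast (k : ℝ) :
    Pairwise (Function.onFun Disjoint fun n : ℕ => Ioc (k + n) (k + n + 1)) :=
  fun i j hij => by
    simpa using pairwise_disjoint_Ioc_add_intCast k (Nat.cast_injective.ne hij : (i : ℤ) ≠ j)

lemma Ioc_add_natCast_subset_Ioi (n : ℕ) : Ioc (k + n) (k + n + 1) ⊆ Ioi k := fun _ ht =>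
  lt_of_le_of_lt (le_add_of_nonneg_right (Nat.cast_nonneg n)) ht.1

lemma integrableOn_Ioi_of_norm_le (hg : AEStronglyMeasurable g (volume.restrict (Ioi k)))
    (hv : Summable v) (hgv : ∀ n : ℕ, ∀ t ∈ Ioc (k + n) (k + n + 1), ‖g t‖ ≤ v n) :
    IntegrableOn g (Ioi k) := by
  have hpiece (n : ℕ) : IntegrableOn g (Ioc (k + n) (k + n + 1)) :=
    .of_bound measure_Ioc_lt_top (hg.mono_set (Ioc_add_natCast_subset_Ioi n)) (v n)
      ((ae_restrict_iff' measurableSet_Ioc).2 (ae_of_all _ (hgv n)))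
  rw [Ioi_eq_iUnion_Ioc_add_natCast k]
  refine integrableOn_iUnion_of_summable_integral_norm hpiece
    (hv.of_nonneg_of_le (fun n => integral_nonneg fun _ => norm_nonneg _) fun n => ?_)
  simpa using setIntegral_mono_on (hpiece n).norm (integrableOn_const measure_Ioc_lt_top.ne)
    measurableSet_Ioc (hgv n)

lemma hasSum_integral_Ioc_add_natCast (hg : IntegrableOn g (Ioi k)) :
    HasSum (fun n : ℕ => ∫ t in Ioc (k + n) (k + n + 1), g t) (∫ t in Ioi k, g t) := by
  rw [Ioi_eq_iUnion_Ioc_add_natCast k] at hg ⊢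
  exact hasSum_integral_iUnion (fun _ => measurableSet_Ioc)
    (pairwise_disjoint_Ioc_add_natCast k) hg

lemma integral_Ioi_le_tsum (hg : IntegrableOn g (Ioi k)) (hu : Summable u)
    (hgu : ∀ n : ℕ, ∀ t ∈ Ioc (k + n) (k + n + 1), g t ≤ u n) :
    ∫ t in Ioi k, g t ≤ ∑' n, u n := by
  refine hasSum_le (fun n => ?_) (hasSum_integral_Ioc_add_natCast hg) hu.hasSum
  simpa using setIntegral_mono_on (hg.mono_set (Ioc_add_natCast_subset_Ioi n))
    (integrableOn_const measure_Ioc_lt_top.ne) measurableSet_Ioc (hgu n)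

lemma tsum_le_integral_Ioi (hg : IntegrableOn g (Ioi k)) (hu : Summable u)
    (hug : ∀ n : ℕ, ∀ t ∈ Ioc (k + n) (k + n + 1), u n ≤ g t) :
    ∑' n, u n ≤ ∫ t in Ioi k, g t := by
  refine hasSum_le (fun n => ?_) hu.hasSum (hasSum_integral_Ioc_add_natCast hg)
  simpa using setIntegral_mono_on (integrableOn_const measure_Ioc_lt_top.ne)
    (hg.mono_set (Ioc_add_natCast_subset_Ioi n)) measurableSet_Ioc (hug n)

end SumIntegral

section ChangeOfVariables

variable {a c : ℝ}

lemma image_div_Ioi_zero (hc : 0 < c) : (fun t : ℝ => c / (2 * t)) '' Ioi 0 = Ioi 0 := by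
  ext s
  refine ⟨?_, fun hs => ⟨c / (2 * s), ?_, ?_⟩⟩
  · rintro ⟨t, ht, rfl⟩
    exact div_pos hc (mul_pos two_pos ht)
  · exact div_pos hc (mul_pos two_pos hs)
  · field_simp

lemma image_div_Ioi (hc : 0 < c) (ha : 0 < a) :
    (fun t : ℝ => c / (2 * t)) '' Ioi a = Ioo 0 (c / (2 * a)) := by
  ext s
  refine ⟨?_, fun hs => ⟨c / (2 * s), ?_, ?_⟩⟩
  · rintro ⟨t, ht, rfl⟩
    have ht0 : 0 < t := ha.trans ht
    exact ⟨by positivity, div_lt_div_of_pos_left hc (by positivity) (by simpa using ht)⟩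
  · obtain ⟨hs0, hs⟩ := hs
    rw [mem_Ioi, lt_div_iff₀ (by positivity)]
    rw [lt_div_iff₀ (by positivity)] at hs
    linarith
  · field_simp

lemma integral_image_div_Ioi (hc : 0 < c) (ha : 0 ≤ a) (f : ℝ → ℝ) :
    ∫ s in (fun t : ℝ => c / (2 * t)) '' Ioi a, f s
      = ∫ t in Ioi a, c / (2 * t ^ 2) * f (c / (2 * t)) := by
  have hderiv : ∀ t ∈ Ioi a,
      HasDerivWithinAt (fun t : ℝ => c / (2 * t)) (-(c / (2 * t ^ 2))) (Ioi a) t := by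
    intro t ht
    have ht0 : t ≠ 0 := (ha.trans_lt ht).ne'
    have hfun : (fun t : ℝ => c / (2 * t)) = fun t => c / 2 * t⁻¹ := by
      funext x; rw [div_mul_eq_div_div, div_eq_mul_inv]
    rw [hfun, show -(c / (2 * t ^ 2)) = c / 2 * -(t ^ 2)⁻¹ by field_simp]
    exact ((hasDerivAt_inv ht0).const_mul (c / 2)).hasDerivWithinAt
  have hinj : InjOn (fun t : ℝ => c / (2 * t)) (Ioi a) := fun x hx y hy hxy => by
    have := (ha.trans_lt hx).ne'
    have := (ha.trans_lt hy).ne'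
    field_simp at hxy
    linarith
  rw [integral_image_eq_integral_abs_deriv_smul measurableSet_Ioi hderiv hinj]
  refine setIntegral_congr_fun measurableSet_Ioi fun t _ => ?_
  rw [abs_neg, abs_of_nonneg (by positivity), smul_eq_mul]

end ChangeOfVariables

/-- The power and the exponential are monotone in opposite directions, so they get separate
arguments that the sum–integral comparison can move independently. -/
noncomputable def gaussWeight (p c x y : ℝ) : ℝ :=
  (c / 2) ^ (p - 1) * x ^ (-p) * exp (-(c / (2 * y)))

section GaussWeight

variable {p c e t x x' y y' : ℝ}

lemma gaussWeight_nonneg (hc : 0 ≤ c) (hx : 0 ≤ x) : 0 ≤ gaussWeight p c x y := by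
  unfold gaussWeight; positivity

lemma gaussWeight_le_gaussWeight (hp : 0 ≤ p) (hc : 0 ≤ c) (hx' : 0 < x') (hx : x' ≤ x)
    (hy : 0 < y) (hy' : y ≤ y') : gaussWeight p c x y ≤ gaussWeight p c x' y' := by
  have hexp : exp (-(c / (2 * y))) ≤ exp (-(c / (2 * y'))) := by gcongr
  exact mul_le_mul (mul_le_mul_of_nonneg_left (rpow_le_rpow_of_nonpos hx' hx (neg_nonpos.2 hp))
    (by positivity)) hexp (exp_pos _).le (by positivity)

lemma gaussWeight_le (hc : 0 ≤ c) (hx : 0 ≤ x) (hy : 0 < y) :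
    gaussWeight p c x y ≤ (c / 2) ^ (p - 1) * x ^ (-p) := by
  unfold gaussWeight
  exact mul_le_of_le_one_right (by positivity) (exp_le_one_iff.2 (by simp; positivity))

lemma jacobian_mul_rpow_eq_gaussWeight (hc : 0 < c) (ht : 0 < t) (hte : 0 < t + e) :
    c / (2 * t ^ 2) * ((c / (2 * t)) ^ (p - 2) * exp (-(c / (2 * t))) * ((t + e) / t) ^ (-p))
      = gaussWeight p c (t + e) t := by
  rw [show c / (2 * t) = c / 2 / t by ring, div_rpow (by positivity) ht.le,
    div_rpow hte.le ht.le, rpow_sub ht, rpow_neg ht.le, rpow_two, gaussWeight,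
    show p - 1 = p - 2 + 1 by ring, rpow_add_one (by positivity)]
  field_simp

end GaussWeight

lemma summable_natCast_add_one_rpow_neg {p : ℝ} (hp : 1 < p) :
    Summable fun n : ℕ => ((n : ℝ) + 1) ^ (-p) := by
  simpa using (summable_nat_add_iff 1).2 (Real.summable_nat_rpow.2 (neg_lt_neg hp))

section Sandwich

variable {p c : ℝ} {N : ℝ → ℝ}

lemma summable_gaussWeight_mul (hp : 1 < p) (hc : 0 < c) (hN : Antitone N)
    (hN0 : ∀ t, 0 ≤ N t) : Summable fun n : ℕ => gaussWeight p c (n + 1) (n + 1) * N n := by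
  refine ((summable_natCast_add_one_rpow_neg hp).mul_left ((c / 2) ^ (p - 1) * N 0)).of_nonneg_of_le
    (fun n => mul_nonneg (gaussWeight_nonneg hc.le (by positivity)) (hN0 _)) fun n => ?_
  calc gaussWeight p c (n + 1) (n + 1) * N n ≤ (c / 2) ^ (p - 1) * ((n : ℝ) + 1) ^ (-p) * N 0 :=
        mul_le_mul (gaussWeight_le hc.le (by positivity) (by positivity)) (hN (Nat.cast_nonneg n))
          (hN0 _) (by positivity)
    _ = _ := by ring

theorem integral_le_tsum_gaussWeight (hp : 1 < p) (hc : 0 < c) (hN : Antitone N)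
    (hN0 : ∀ t, 0 ≤ N t) :
    ∫ s in Ioi 0, s ^ (p - 2) * exp (-s) * (1 + 2 * s / c) ^ (-p) * N (c / (2 * s))
      ≤ ∑' n : ℕ, gaussWeight p c (n + 1) (n + 1) * N n := by
  have hcov : ∫ s in Ioi 0, s ^ (p - 2) * exp (-s) * (1 + 2 * s / c) ^ (-p) * N (c / (2 * s))
      = ∫ t in Ioi 0, gaussWeight p c (t + 1) t * N t := by
    conv_lhs => rw [← image_div_Ioi_zero hc, integral_image_div_Ioi hc le_rfl]
    refine setIntegral_congr_fun measurableSet_Ioi fun t (ht : 0 < t) => ?_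
    rw [show c / (2 * (c / (2 * t))) = t by field_simp,
      show 1 + 2 * (c / (2 * t)) / c = (t + 1) / t by field_simp,
      ← jacobian_mul_rpow_eq_gaussWeight hc ht (by linarith)]
    ring
  have hle : ∀ n : ℕ, ∀ t ∈ Ioc ((0 : ℝ) + n) (0 + n + 1),
      gaussWeight p c (t + 1) t * N t ≤ gaussWeight p c (n + 1) (n + 1) * N n := by
    rintro n t ⟨htn, htn'⟩
    rw [zero_add] at htn htn'
    have ht : 0 < t := (Nat.cast_nonneg n).trans_lt htn
    exact mul_le_mul (gaussWeight_le_gaussWeight (by linarith) hc.le (by positivity)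
      (by linarith) ht htn') (hN htn.le) (hN0 _) (gaussWeight_nonneg hc.le (by positivity))
  have hmeas : Measurable fun t => gaussWeight p c (t + 1) t * N t := by
    have := hN.measurable
    unfold gaussWeight
    fun_prop
  have hsum := summable_gaussWeight_mul hp hc hN hN0
  rw [hcov]
  refine integral_Ioi_le_tsum (integrableOn_Ioi_of_norm_le hmeas.aestronglyMeasurable hsum
    fun n t ht => ?_) hsum hle
  have ht0 : 0 < t := lt_of_le_of_lt (by simp) ht.1
  rw [Real.norm_of_nonneg (mul_nonneg (gaussWeight_nonneg hc.le (by positivity)) (hN0 _))]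
  exact hle n t ht

theorem tsum_gaussWeight_le (hp : 1 < p) (hc : 0 < c) (hN : Antitone N) (hN0 : ∀ t, 0 ≤ N t) :
    ∑' n : ℕ, gaussWeight p c (n + 1) (n + 1) * N n
      ≤ gaussWeight p c 1 1 * N 0 + ∫ s in Ioc 0 (c / 4),
          s ^ (p - 2) * exp (-s) * (1 - 2 * s / c) ^ (-p) * N (c / (2 * s) - 2) := by
  have hcov : ∫ s in Ioc 0 (c / 4),
        s ^ (p - 2) * exp (-s) * (1 - 2 * s / c) ^ (-p) * N (c / (2 * s) - 2)
      = ∫ t in Ioi 2, gaussWeight p c (t - 1) t * N (t - 2) := by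
    rw [← setIntegral_congr_set Ioo_ae_eq_Ioc, show c / 4 = c / (2 * 2) by ring,
      ← image_div_Ioi hc two_pos, integral_image_div_Ioi hc zero_le_two]
    refine setIntegral_congr_fun measurableSet_Ioi fun t (ht : 2 < t) => ?_
    rw [show c / (2 * (c / (2 * t))) = t by field_simp,
      show 1 - 2 * (c / (2 * t)) / c = (t + -1) / t by field_simp; ring, sub_eq_add_neg t 1,
      ← jacobian_mul_rpow_eq_gaussWeight hc (by linarith) (by linarith)]
    ring
  have hle : ∀ n : ℕ, ∀ t ∈ Ioc ((2 : ℝ) + n) (2 + n + 1),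
      gaussWeight p c (n + 1 + 1) (n + 1 + 1) * N (n + 1)
        ≤ gaussWeight p c (t - 1) t * N (t - 2) := by
    rintro n t ⟨htn, htn'⟩
    have hn : (0 : ℝ) ≤ n := Nat.cast_nonneg n
    exact mul_le_mul (gaussWeight_le_gaussWeight (by linarith) hc.le (by linarith)
      (by linarith) (by linarith) (by linarith)) (hN (by linarith)) (hN0 _)
      (gaussWeight_nonneg hc.le (by linarith))
  have hbound : ∀ n : ℕ, ∀ t ∈ Ioc ((2 : ℝ) + n) (2 + n + 1),
      ‖gaussWeight p c (t - 1) t * N (t - 2)‖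
        ≤ (c / 2) ^ (p - 1) * N 0 * ((n : ℝ) + 1) ^ (-p) := by
    rintro n t ⟨htn, htn'⟩
    have hn : (0 : ℝ) ≤ n := Nat.cast_nonneg n
    rw [Real.norm_of_nonneg (mul_nonneg (gaussWeight_nonneg hc.le (by linarith)) (hN0 _))]
    calc gaussWeight p c (t - 1) t * N (t - 2)
        ≤ (c / 2) ^ (p - 1) * ((n : ℝ) + 1) ^ (-p) * N 0 :=
          mul_le_mul ((gaussWeight_le hc.le (by linarith) (by linarith)).trans
            (mul_le_mul_of_nonneg_left
              (rpow_le_rpow_of_nonpos (by positivity) (by linarith) (by linarith)) (by positivity)))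
            (hN (by linarith)) (hN0 _) (by positivity)
      _ = _ := by ring
  have hmeas : Measurable fun t => gaussWeight p c (t - 1) t * N (t - 2) := by
    have := hN.measurable
    unfold gaussWeight
    fun_prop
  have hsum := summable_gaussWeight_mul hp hc hN hN0
  rw [hsum.tsum_eq_zero_add, hcov]
  push_cast [zero_add]
  gcongr
  exact tsum_le_integral_Ioi (integrableOn_Ioi_of_norm_le hmeas.aestronglyMeasurable
    ((summable_natCast_add_one_rpow_neg hp).mul_left _) hbound)
    (by exact_mod_cast (summable_nat_add_iff 1).2 hsum) hle

end Sandwich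

section Translation

lemma znorm_pos {d : ℕ} {z : Fin d → ℤ} (hz : z ≠ 0) : 0 < znorm d z := by
  obtain ⟨i, hi⟩ := Function.ne_iff.1 hz
  have hi' : (z i : ℝ) ≠ 0 := by exact_mod_cast hi
  exact sqrt_pos.2
    (Finset.sum_pos' (fun j _ => sq_nonneg _) ⟨i, Finset.mem_univ i, by positivity⟩)

noncomputable def tailProb (ν : Measure ℕ) (t : ℝ) : ℝ := (ν {m : ℕ | t < m}).toReal

variable {ν : Measure ℕ}

lemma tailProb_nonneg (ν : Measure ℕ) (t : ℝ) : 0 ≤ tailProb ν t := ENNReal.toReal_nonneg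

lemma tailProb_antitone [IsFiniteMeasure ν] : Antitone (tailProb ν) := fun _ _ hst =>
  ENNReal.toReal_mono (measure_ne_top ν _) (measure_mono fun _ hm => lt_of_le_of_lt hst hm)

lemma tailProb_le_one [IsProbabilityMeasure ν] (t : ℝ) : tailProb ν t ≤ 1 :=
  measureReal_le_one

lemma tailProb_natCast (n : ℕ) : (ν {m : ℕ | n + 1 ≤ m}).toReal = tailProb ν n := by
  simp only [tailProb, Nat.cast_lt, Nat.succ_le_iff]

lemma tailProb_div {s c : ℝ} (hs : 0 < s) (hc : 0 < c) :
    (ν {m : ℕ | 1 / s < 2 * (m : ℝ) / c}).toReal = tailProb ν (c / (2 * s)) := by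
  unfold tailProb
  congr 3
  ext m
  rw [div_lt_div_iff₀ hs hc, div_lt_iff₀ (by positivity)]
  constructor <;> intro h <;> linarith

lemma tailProb_div_sub {s c : ℝ} (hs : 0 < s) (hc : 0 < c) :
    (ν {m : ℕ | 1 / s - 4 / c < 2 * (m : ℝ) / c}).toReal = tailProb ν (c / (2 * s) - 2) := by
  unfold tailProb
  congr 3
  ext m
  rw [sub_lt_iff_lt_add, ← add_div, div_lt_div_iff₀ hs hc,
    sub_lt_iff_lt_add, div_lt_iff₀ (by positivity)]
  constructor <;> intro h <;> linarith

lemma pbar_eq_gaussWeight {d : ℕ} {z : Fin d → ℤ} {n : ℕ} (hd : 0 < d) (hn : 0 < n)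
    (hz : 0 < znorm d z) :
    2 * π ^ ((d : ℝ) / 2) / d * znorm d z ^ ((d : ℝ) - 2) * (pbar d n z / 2)
      = gaussWeight ((d : ℝ) / 2) (d * znorm d z ^ 2) n n := by
  rw [pbar, gaussWeight]
  set r := znorm d z
  have hd' : (0 : ℝ) < d := Nat.cast_pos.2 hd
  have hn' : (0 : ℝ) < n := Nat.cast_pos.2 hn
  have hr2 : (r ^ 2) ^ ((d : ℝ) / 2 - 1) = r ^ ((d : ℝ) - 2) := by
    rw [← rpow_natCast, ← rpow_mul hz.le]; push_cast; ring_nf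
  rw [show (d : ℝ) * r ^ 2 / 2 = d / 2 * r ^ 2 by ring,
    mul_rpow (by positivity) (by positivity), hr2, rpow_sub_one (by positivity),
    show (d : ℝ) / (2 * π * n) = d / 2 / (π * n) by ring,
    div_rpow (by positivity) (by positivity),
    mul_rpow pi_pos.le hn'.le, rpow_neg hn'.le, neg_mul, neg_div]
  field_simp

lemma mul_pbar_one_eq_gaussWeight {d : ℕ} {z : Fin d → ℤ} (hd : 0 < d) (hz : 0 < znorm d z) :
    π ^ ((d : ℝ) / 2) / d * znorm d z ^ ((d : ℝ) - 2) * pbar d 1 z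
      = gaussWeight ((d : ℝ) / 2) (d * znorm d z ^ 2) 1 1 := by
  have h := pbar_eq_gaussWeight (n := 1) hd one_pos hz
  rw [Nat.cast_one] at h
  rw [← h]
  ring

lemma mul_tsum_pbar_eq_tsum_gaussWeight {d : ℕ} {z : Fin d → ℤ} (hd : 0 < d)
    (hz : 0 < znorm d z) :
    2 * π ^ ((d : ℝ) / 2) / d * znorm d z ^ ((d : ℝ) - 2) *
        ∑' n : ℕ, pbar d (n + 1) z / 2 * (ν {m : ℕ | n + 1 ≤ m}).toReal
      = ∑' n : ℕ, gaussWeight ((d : ℝ) / 2) (d * znorm d z ^ 2) (n + 1) (n + 1)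
          * tailProb ν n := by
  rw [← tsum_mul_left]
  refine tsum_congr fun n => ?_
  rw [← mul_assoc, pbar_eq_gaussWeight hd n.succ_pos hz, tailProb_natCast]
  push_cast
  rfl

end Translation

/-- `ν` is the law of `𝒩`. -/
theorem gaussian_main_term_sandwich (d : ℕ) (hd : 3 ≤ d)
    (ν : Measure ℕ) [IsProbabilityMeasure ν]
    (z : Fin d → ℤ) (hz : z ≠ 0) :
    (∫ s in Ioi (0 : ℝ),
        s ^ ((d : ℝ) / 2 - 2) * Real.exp (-s) *
          (1 + 2 * s / ((d : ℝ) * znorm d z ^ 2)) ^ (-(d : ℝ) / 2) *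
          (ν {m : ℕ | 1 / s < 2 * (m : ℝ) / ((d : ℝ) * znorm d z ^ 2)}).toReal) ≤
      (2 * π ^ ((d : ℝ) / 2) / (d : ℝ)) * znorm d z ^ ((d : ℝ) - 2) *
        (∑' n : ℕ, (pbar d (n + 1) z / 2) * (ν {m : ℕ | n + 1 ≤ m}).toReal) ∧
    (2 * π ^ ((d : ℝ) / 2) / (d : ℝ)) * znorm d z ^ ((d : ℝ) - 2) *
        (∑' n : ℕ, (pbar d (n + 1) z / 2) * (ν {m : ℕ | n + 1 ≤ m}).toReal) ≤
      (π ^ ((d : ℝ) / 2) / (d : ℝ)) * znorm d z ^ ((d : ℝ) - 2) * pbar d 1 z +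
        ∫ s in Ioc (0 : ℝ) ((d : ℝ) * znorm d z ^ 2 / 4),
          s ^ ((d : ℝ) / 2 - 2) * Real.exp (-s) *
            (1 - 2 * s / ((d : ℝ) * znorm d z ^ 2)) ^ (-(d : ℝ) / 2) *
            (ν {m : ℕ | 1 / s - 4 / ((d : ℝ) * znorm d z ^ 2) <
                2 * (m : ℝ) / ((d : ℝ) * znorm d z ^ 2)}).toReal := by
  have hr := znorm_pos hz
  have hd0 : 0 < d := by omega
  have hp : 1 < (d : ℝ) / 2 := by
    have : (3 : ℝ) ≤ d := by exact_mod_cast hd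
    linarith
  have hc : 0 < (d : ℝ) * znorm d z ^ 2 := by positivity
  rw [mul_tsum_pbar_eq_tsum_gaussWeight hd0 hr, mul_pbar_one_eq_gaussWeight hd0 hr, neg_div]
  constructor
  · refine le_of_eq_of_le (setIntegral_congr_fun measurableSet_Ioi fun s (hs : 0 < s) => ?_)
      (integral_le_tsum_gaussWeight hp hc tailProb_antitone (tailProb_nonneg ν))
    rw [tailProb_div hs hc]
  · refine (tsum_gaussWeight_le hp hc tailProb_antitone (tailProb_nonneg ν)).trans
      (add_le_add (mul_le_of_le_one_right (gaussWeight_nonneg hc.le zero_le_one)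
        (tailProb_le_one 0)) (setIntegral_congr_fun measurableSet_Ioc fun s hs => ?_).le)
    rw [tailProb_div_sub hs.1 hc]
end
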